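/- For all integers m, j with 0 ≤ m < j and every x ∈ ℝ, one has 0 ≤ (1 − χⱼ(x))·χₘ(x) ≤ δ₁. -/

import Mathlib

open MeasureTheory Real Complex Set Function
open scoped ENNReal

noncomputable section

/-- The error function `erf x = (2/√π) ∫₀ˣ e^{-t²} dt`. -/
def erf' (x : ℝ) : ℝ := (2 / Real.sqrt Real.pi) * ∫ t in (0:ℝ)..x, Real.exp (-t^2)

/-- The complementary error function `erfc x = 1 - erf x`. -/
def erfc' (x : ℝ) : ℝ := 1 - erf' x

/-- The inverse of the strictly decreasing bijection `erfc' : [0,∞) → (0,1]`. -/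
def erfcInv (y : ℝ) : ℝ := Function.invFunOn erfc' (Set.Ici 0) y

/-- The spatial cutoff χ₀(x) = (1/2)[erf((x+3L/4)/σ) − erf((x−3L/4)/σ)]. -/
def chi0 (L σ x : ℝ) : ℝ := (1/2) * (erf' ((x + 3*L/4)/σ) - erf' ((x - 3*L/4)/σ))

/-- The frequency cutoff P₀(k) = (1/2)[erf(σ(k+3kmax/8)) − erf(σ(k−3kmax/8))]. -/
def P0fun (kmax σ k : ℝ) : ℝ := (1/2) * (erf' (σ*(k + 3*kmax/8)) - erf' (σ*(k - 3*kmax/8)))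

/-- The scaled spatial cutoff χₘ(x) = χ₀(2^{-m} x). -/
def chiSc (L σ : ℝ) (m : ℕ) (x : ℝ) : ℝ := chi0 L σ (x / 2^m)

/-- The scaled frequency cutoff Pₘ(k) = P₀(2^m k). -/
def PSc (kmax σ : ℝ) (m : ℕ) (k : ℝ) : ℝ := P0fun kmax σ (2^m * k)

/-- Fourier transform with the convention f̂(k) = (2π)^{-1/2} ∫ f(x) e^{-ikx} dx. -/
def ft (f : ℝ → ℂ) (k : ℝ) : ℂ :=
  (Real.sqrt (2*Real.pi) : ℂ)⁻¹ * ∫ x : ℝ, Complex.exp (-(Complex.I * k * x)) * f x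

/-- Inverse Fourier transform with the convention (2π)^{-1/2} ∫ g(k) e^{ikx} dk. -/
def ift (g : ℝ → ℂ) (x : ℝ) : ℂ :=
  (Real.sqrt (2*Real.pi) : ℂ)⁻¹ * ∫ k : ℝ, Complex.exp (Complex.I * k * x) * g k

/-- The space L²(ℝ, ℂ). -/
abbrev L2 := Lp ℂ 2 (volume : Measure ℝ)

/-- `T` is the bounded Fourier multiplier operator on L² with symbol `m`: on the
dense set of `f ∈ L¹ ∩ L²` with integrable Fourier transform, `T f = 𝓕⁻¹(m·𝓕f)`.
(This uniquely determines `T` for a bounded symbol.) -/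
def IsMultOp (m : ℝ → ℝ) (T : L2 →L[ℂ] L2) : Prop :=
  ∀ f : L2, Integrable (f : ℝ → ℂ) volume → Integrable (ft (f : ℝ → ℂ)) volume →
    (T f : ℝ → ℂ) =ᵐ[volume] ift (fun k => (m k : ℂ) * ft (f : ℝ → ℂ) k)

/-- `T` is the operator of pointwise multiplication by the real function `c`. -/
def IsMulBy (c : ℝ → ℝ) (T : L2 →L[ℂ] L2) : Prop :=
  ∀ f : L2, (T f : ℝ → ℂ) =ᵐ[volume] fun x => (c x : ℂ) * f x

lemma expsq_cont : Continuous fun t : ℝ => Real.exp (-t^2) := by continuity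

lemma expsq_int : Integrable (fun t : ℝ => Real.exp (-t^2)) := by
  simpa using integrable_exp_neg_mul_sq (b := 1) one_pos

lemma erf'_mono : Monotone erf' := by
  intro a b hab
  unfold erf'
  have hint : ∀ u v : ℝ, IntervalIntegrable (fun t : ℝ => Real.exp (-t^2)) volume u v :=
    fun u v => expsq_cont.intervalIntegrable u v
  have h := intervalIntegral.integral_add_adjacent_intervals (hint 0 a) (hint a b)
  have h2 : 0 ≤ ∫ t in a..b, Real.exp (-t^2) :=
    intervalIntegral.integral_nonneg hab (fun u _ => (Real.exp_pos _).le)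
  have : (∫ t in (0:ℝ)..a, Real.exp (-t^2)) ≤ ∫ t in (0:ℝ)..b, Real.exp (-t^2) := by
    rw [← h]; linarith
  have hpos : (0:ℝ) ≤ 2 / Real.sqrt Real.pi := by positivity
  exact mul_le_mul_of_nonneg_left this hpos

lemma erf'_neg (x : ℝ) : erf' (-x) = - erf' x := by
  unfold erf'
  have : (∫ t in (0:ℝ)..x, Real.exp (-t^2)) = ∫ t in (0:ℝ)..x, Real.exp (-(-t)^2) := by
    simp
  rw [← mul_neg]
  congr 1
  rw [this, intervalIntegral.integral_comp_neg (f := fun t => Real.exp (-t^2)),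
    neg_zero, intervalIntegral.integral_symm]

lemma erf'_zero : erf' 0 = 0 := by simp [erf']

lemma erf'_le_one (x : ℝ) : erf' x ≤ 1 := by
  rcases le_or_gt x 0 with hx | hx
  · have := erf'_mono hx
    rw [erf'_zero] at this
    linarith
  · unfold erf'
    have h1 : (∫ t in (0:ℝ)..x, Real.exp (-t^2)) ≤ ∫ t in Ioi (0:ℝ), Real.exp (-t^2) := by
      rw [intervalIntegral.integral_of_le hx.le]
      apply setIntegral_mono_set (expsq_int.integrableOn)
      · exact Filter.Eventually.of_forall fun t => (Real.exp_pos _).le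
      · exact Filter.Eventually.of_forall (fun t ht => ht.1)
    have h2 : (∫ t in Ioi (0:ℝ), Real.exp (-t^2)) = Real.sqrt Real.pi / 2 := by
      have := integral_gaussian_Ioi (1:ℝ)
      simp only [one_mul, div_one] at this
      simpa using this
    have hπ : 0 < Real.sqrt Real.pi := Real.sqrt_pos.mpr Real.pi_pos
    calc 2 / Real.sqrt Real.pi * ∫ t in (0:ℝ)..x, Real.exp (-t^2)
        ≤ 2 / Real.sqrt Real.pi * (Real.sqrt Real.pi / 2) := by
          apply mul_le_mul_of_nonneg_left _ (by positivity); rw [← h2] at *; linarith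
      _ = 1 := by field_simp

lemma neg_one_le_erf' (x : ℝ) : -1 ≤ erf' x := by
  have := erf'_le_one (-x); rw [erf'_neg] at this; linarith

lemma erf'_cont : Continuous erf' := by
  unfold erf'
  exact continuous_const.mul (intervalIntegral.continuous_primitive
    (fun a b => expsq_cont.intervalIntegrable a b) 0)

lemma erfc'_cont : Continuous erfc' := continuous_const.sub erf'_cont

lemma erfc'_tendsto : Filter.Tendsto erfc' Filter.atTop (nhds 0) := by
  have h : Filter.Tendsto (fun x => ∫ t in (0:ℝ)..x, Real.exp (-t^2)) Filter.atTop
      (nhds (∫ t in Ioi (0:ℝ), Real.exp (-t^2))) :=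
    intervalIntegral_tendsto_integral_Ioi 0 expsq_int.integrableOn Filter.tendsto_id
  have h2 : (∫ t in Ioi (0:ℝ), Real.exp (-t^2)) = Real.sqrt Real.pi / 2 := by
    have := integral_gaussian_Ioi (1:ℝ)
    simp only [one_mul, div_one] at this
    simpa using this
  have hπ : 0 < Real.sqrt Real.pi := Real.sqrt_pos.mpr Real.pi_pos
  have herf : Filter.Tendsto erf' Filter.atTop (nhds 1) := by
    have := h.const_mul (2 / Real.sqrt Real.pi)
    rw [h2] at this
    have heq : 2 / Real.sqrt Real.pi * (Real.sqrt Real.pi / 2) = 1 := by field_simp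
    rw [heq] at this
    exact this
  have := (tendsto_const_nhds (x := (1:ℝ)) (f := Filter.atTop)).sub herf
  simp at this; exact this

lemma erfcInv_spec {δ : ℝ} (hδpos : 0 < δ) (hδle : δ ≤ erfc' 1) :
    erfcInv δ ∈ Ici (0:ℝ) ∧ erfc' (erfcInv δ) = δ := by
  have h1 : erfc' 0 = 1 := by simp [erfc', erf'_zero]
  have hδ1 : δ ≤ 1 := by
    have := erf'_mono (le_of_lt one_pos); rw [erf'_zero] at this
    have : erfc' 1 ≤ 1 := by unfold erfc'; linarith
    linarith
  have hex : ∃ a ∈ Ici (0:ℝ), erfc' a = δ := by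
    obtain ⟨X, hX⟩ := Filter.eventually_atTop.mp
      (erfc'_tendsto.eventually (eventually_lt_nhds hδpos))
    have hX' : erfc' (max X 0) < δ := hX _ (le_max_left _ _)
    have hsub := intermediate_value_Icc' (le_max_right X 0)
      ((erfc'_cont).continuousOn)
    have hδmem : δ ∈ Icc (erfc' (max X 0)) (erfc' 0) := ⟨hX'.le, by rw [h1]; exact hδ1⟩
    obtain ⟨a, ha, hav⟩ := hsub hδmem
    exact ⟨a, ha.1, hav⟩
  exact ⟨Function.invFunOn_mem hex, Function.invFunOn_eq hex⟩


lemma chi0_nonneg (L σ x : ℝ) (hL : 0 < L) (hσ : 0 < σ) : 0 ≤ chi0 L σ x := by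
  have : (x - 3*L/4)/σ ≤ (x + 3*L/4)/σ := by
    apply div_le_div_of_nonneg_right _ hσ.le <;> linarith
  have := erf'_mono this
  unfold chi0; linarith

lemma chi0_le_one (L σ x : ℝ) : chi0 L σ x ≤ 1 := by
  have h1 := erf'_le_one ((x + 3*L/4)/σ)
  have h2 := neg_one_le_erf' ((x - 3*L/4)/σ)
  unfold chi0; linarith

lemma chi0_ge {L σ c δ₁ : ℝ} (hσ : 0 < σ) (hc0 : 0 ≤ c) (hcσ : c * σ ≤ L / 4)
    (herfc : erf' c = 1 - δ₁) {y : ℝ} (hy : |y| ≤ L / 2) : 1 - δ₁ ≤ chi0 L σ y := by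
  obtain ⟨hy1, hy2⟩ := abs_le.mp hy
  have hu : c ≤ (y + 3*L/4)/σ := (le_div_iff₀ hσ).mpr (by nlinarith)
  have hw : c ≤ (3*L/4 - y)/σ := (le_div_iff₀ hσ).mpr (by nlinarith)
  have h1 := erf'_mono hu
  have h2 := erf'_mono hw
  have h3 : erf' ((y - 3*L/4)/σ) = - erf' ((3*L/4 - y)/σ) := by
    rw [← erf'_neg]; ring_nf
  unfold chi0; rw [h3]; linarith [herfc ▸ h1, herfc ▸ h2]

lemma chi0_le {L σ c δ₁ : ℝ} (hσ : 0 < σ) (hδpos : 0 < δ₁) (hc0 : 0 ≤ c)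
    (hcσ : c * σ ≤ L / 4) (herfc : erf' c = 1 - δ₁) {y : ℝ} (hy : L ≤ |y|) :
    chi0 L σ y ≤ δ₁ := by
  rcases le_abs.mp hy with hcase | hcase
  · have hv : c ≤ (y - 3*L/4)/σ := (le_div_iff₀ hσ).mpr (by nlinarith)
    have h2 := herfc ▸ erf'_mono hv
    have h1 := erf'_le_one ((y + 3*L/4)/σ)
    unfold chi0; linarith
  · have hu : (y + 3*L/4)/σ ≤ -c := by
      rw [div_le_iff₀ hσ]; nlinarith
    have h1 := erf'_mono hu
    rw [erf'_neg, herfc] at h1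
    have h2 := neg_one_le_erf' ((y - 3*L/4)/σ)
    unfold chi0; linarith

/-- For 0 ≤ m < j and all x, 0 ≤ (1 − χⱼ(x))·χₘ(x) ≤ δ₁. -/
theorem stmt10 (L kmax σ δ₁ : ℝ) (hL : 0 < L) (hk : 0 < kmax) (hσ : 0 < σ)
    (hδpos : 0 < δ₁) (hδle : δ₁ ≤ erfc' 1)
    (hσlo : 8 * erfcInv δ₁ / kmax ≤ σ) (hσhi : σ ≤ L / (8 * erfcInv δ₁))
    (m j : ℕ) (hmj : m < j) (x : ℝ) :
    0 ≤ (1 - chiSc L σ j x) * chiSc L σ m x ∧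
      (1 - chiSc L σ j x) * chiSc L σ m x ≤ δ₁ := by
  obtain ⟨hc0, hcv⟩ := erfcInv_spec hδpos hδle
  set c := erfcInv δ₁ with hc
  have hc0' : (0:ℝ) ≤ c := hc0
  have herfc : erf' c = 1 - δ₁ := by unfold erfc' at hcv; linarith
  have hcσ : c * σ ≤ L / 4 := by
    rcases eq_or_lt_of_le hc0' with h0 | h0
    · rw [← h0]; linarith
    · have h8 : (0:ℝ) < 8 * c := by linarith
      have := (le_div_iff₀ h8).mp hσhi
      nlinarith
  have h2j : (0:ℝ) < 2^j := by positivity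
  have h2m : (0:ℝ) < 2^m := by positivity
  have hnnm := chi0_nonneg L σ (x/2^m) hL hσ
  have hnnj := chi0_nonneg L σ (x/2^j) hL hσ
  have h1m := chi0_le_one L σ (x/2^m)
  have h1j := chi0_le_one L σ (x/2^j)
  simp only [chiSc]
  refine ⟨by nlinarith, ?_⟩
  rcases le_or_gt |x| (2^m * L) with hx | hx
  · have hpow : (2:ℝ)^m * 2 ≤ 2^j := by
      have h1 : (2:ℝ)^(m+1) ≤ 2^j :=
        pow_le_pow_right₀ one_le_two (Nat.succ_le.mpr hmj)
      rw [pow_succ] at h1; linarith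
    have hyj : |x/2^j| ≤ L/2 := by
      rw [abs_div, abs_of_pos h2j, div_le_iff₀ h2j]
      nlinarith
    have hA := chi0_ge hσ hc0' hcσ herfc hyj
    nlinarith
  · have hym : L ≤ |x/2^m| := by
      rw [abs_div, abs_of_pos h2m, le_div_iff₀ h2m]
      nlinarith
    have hB := chi0_le hσ hδpos hc0' hcσ herfc hym
    nlinarith


end
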